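/- With Q, Φ, Ψ, S as above, the number of elements of S of weight exactly 2 is 3·(2⁵−1) + 3·(2⁵−1)·2⁴·2⁴ = 23 901. Moreover, assigning dimension 156 to the weight-0 element counted three times per coordinate VOA factor (dim contribution 156·3 = 468), dimension 8² = 64 to each element of the form (a,a,0) type, and dimension 8 to each element of the form (a+b+c,a+c,b+c) with exactly one nonzero singular coordinate, the total 156·3 + (2⁵−1)·3·8² + (2⁵−1)·2⁴·2⁴·3·8 equals 196 884. -/

import Mathlib

/-!
Every element of `S` is `(a + b, a + a' + b, a' + b)` for a unique `(b, a, a') ∈ Ψ × Φ × Φ`.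
If `b = 0` all three coordinates are singular, so weight `2` means that exactly one of them
vanishes: `3 (2⁵ - 1)` elements. If `b ≠ 0` no coordinate vanishes (`Φ ∩ Ψ = 0`) and
`q (a + b) = ⟨a, b⟩`, so the weights are read off from `s = ⟨a, b⟩`, `t = ⟨a', b⟩` and `s + t`;
over `𝔽₂` their sum is `2` unless `s = t = 0`. As `Φ ⊕ Ψ = Q` and the polar form is
nondegenerate, `⟨·, b⟩` is a nonzero functional on `Φ`, with kernel of size `2⁴`; this leaves
`2¹⁰ - 2⁸` pairs `(a, a')` for each of the `2⁵ - 1` vectors `b`.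
-/

open Finset QuadraticMap Module

section Counting

variable {α : Type*} [Fintype α] [DecidableEq α]

lemma card_filter_exactly_one_eq_zero [Zero α] :
    #{x : α × α | (x.1 = 0 ∧ x.2 ≠ 0) ∨ (x.1 ≠ 0 ∧ x.2 = 0) ∨ (x.1 ≠ 0 ∧ x.2 = x.1)}
      = 3 * (Fintype.card α - 1) := by
  have hzero : #{y : α | y ≠ 0} = Fintype.card α - 1 := by
    rw [filter_ne', card_erase_of_mem (mem_univ _), card_univ]
  have hne : ∀ x ∈ ({0}ᶜ : Finset α),
      (∑ y : α, if (x = 0 ∧ y ≠ 0) ∨ (x ≠ 0 ∧ y = 0) ∨ (x ≠ 0 ∧ y = x) then 1 else 0) = 2 := by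
    intro x hx
    rw [mem_compl, mem_singleton] at hx
    rw [← card_filter, ← card_pair (Ne.symm hx)]
    congr 1
    ext y
    simp [hx]
  rw [card_filter, Fintype.sum_prod_type, Fintype.sum_eq_add_sum_compl 0, sum_const_nat hne,
    card_compl, card_singleton]
  simp only [true_and, ne_eq, not_true_eq_false, false_and, or_false]
  rw [← card_filter, hzero]
  ring

lemma card_filter_not_and (p : α → Prop) [DecidablePred p] :
    #{x : α × α | ¬(p x.1 ∧ p x.2)} = Fintype.card α ^ 2 - #{a | p a} ^ 2 := by
  rw [filter_not, card_sdiff_of_subset (filter_subset _ _), ← univ_product_univ,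
    filter_product (p := p) (q := p), card_product, card_product, card_univ, _root_.sq, _root_.sq]

end Counting

lemma card_filter_apply_eq_zero {K V : Type*} [Field K] [Fintype K] [AddCommGroup V]
    [Module K V] [Fintype V] [DecidableEq K] {f : V →ₗ[K] K} (hf : f ≠ 0) :
    #{x | f x = 0} = Fintype.card K ^ (finrank K V - 1) := by
  classical
  have hrange : finrank K (LinearMap.range f) = 1 := by
    rw [LinearMap.range_eq_top.2 (LinearMap.surjective_of_ne_zero hf), finrank_top, finrank_self]
  have hker := LinearMap.finrank_range_add_finrank_ker f
  have hcard : #{x | f x = 0} = Fintype.card (LinearMap.ker f) := by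
    rw [← Fintype.card_subtype]
    exact Fintype.card_congr (Equiv.subtypeEquivRight fun _ => LinearMap.mem_ker.symm)
  rw [hcard, card_eq_pow_finrank (K := K) (V := LinearMap.ker f)]
  congr 1
  omega

section Polar

variable {R M : Type*} [CommRing R] [AddCommGroup M] [Module R M] (q : QuadraticMap R M R)

lemma apply_add_eq_polar {x y : M} (hx : q x = 0) (hy : q y = 0) : q (x + y) = polar q x y := by
  simp [polar, hx, hy]

lemma polar_eq_zero_of_isotropic {W : Submodule R M} (hW : ∀ x ∈ W, q x = 0) {x y : M}
    (hx : x ∈ W) (hy : y ∈ W) : polar q x y = 0 := by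
  rw [← apply_add_eq_polar q (hW x hx) (hW y hy), hW _ (add_mem hx hy)]

lemma separatingRight_polarBilin_compl₁₂ (hnd : (polarBilin q).SeparatingLeft)
    {Φ Ψ : Submodule R M} (hsup : Φ ⊔ Ψ = ⊤) (hΨ : ∀ x ∈ Ψ, q x = 0) :
    ((polarBilin q).compl₁₂ Φ.subtype Ψ.subtype).SeparatingRight := by
  rintro ⟨b, hb⟩ horth
  rw [Submodule.mk_eq_zero]
  refine hnd b fun y => ?_
  obtain ⟨a, ha, c, hc, rfl⟩ := Submodule.mem_sup.mp (hsup ▸ Submodule.mem_top : y ∈ Φ ⊔ Ψ)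
  rw [polarBilin_apply_apply, polar_comm, polar_add_left,
    polar_eq_zero_of_isotropic q hΨ hc hb, add_zero]
  exact horth ⟨a, ha⟩

end Polar

lemma add_ne_zero_of_disjoint {R M : Type*} [Ring R] [AddCommGroup M] [Module R M]
    {Φ Ψ : Submodule R M} (hdisj : Disjoint Φ Ψ) {a b : M} (ha : a ∈ Φ) (hb : b ∈ Ψ)
    (hb0 : b ≠ 0) : a + b ≠ 0 := fun h =>
  hb0 <| Submodule.disjoint_def.1 hdisj b
    (by rw [eq_neg_of_add_eq_zero_right h]; exact neg_mem ha) hb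

section Triple

variable {R M : Type*} [Ring R] [AddCommGroup M] [Module R M] (Φ Ψ : Submodule R M)

def tripleMap : Ψ × Φ × Φ →ₗ[R] M × M × M where
  toFun t := ((t.2.1 : M) + t.1, (t.2.1 : M) + t.2.2 + t.1, (t.2.2 : M) + t.1)
  map_add' s t := by
    ext <;> simp only [Prod.fst_add, Prod.snd_add, Submodule.coe_add] <;> abel
  map_smul' c t := by
    ext <;> simp

@[simp]
lemma tripleMap_apply (t : Ψ × Φ × Φ) :
    tripleMap Φ Ψ t = ((t.2.1 : M) + t.1, (t.2.1 : M) + t.2.2 + t.1, (t.2.2 : M) + t.1) := rfl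

lemma tripleMap_injective : Function.Injective (tripleMap Φ Ψ) := by
  rw [← LinearMap.ker_eq_bot, Submodule.eq_bot_iff]
  rintro ⟨b, a, a'⟩ h
  simp only [LinearMap.mem_ker, tripleMap_apply, Prod.mk_eq_zero] at h
  obtain ⟨h₁, h₂, h₃⟩ := h
  have ha' : (a' : M) = 0 :=
    calc (a' : M) = (a + a' + b) - (a + b) := by abel
      _ = 0 := by rw [h₁, h₂, sub_zero]
  have hb : (b : M) = 0 := by rwa [ha', zero_add] at h₃
  have ha : (a : M) = 0 := by rwa [hb, add_zero] at h₁
  simp only [Prod.mk_eq_zero, Submodule.coe_eq_zero] at ha hb ha' ⊢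
  exact ⟨hb, ha, ha'⟩

lemma range_tripleMap : LinearMap.range (tripleMap Φ Ψ) = Submodule.span R
      {p : M × M × M | (∃ a ∈ Φ, p = (a, a, 0)) ∨ (∃ a ∈ Φ, p = (0, a, a)) ∨
        (∃ b ∈ Ψ, p = (b, b, b))} := by
  apply le_antisymm
  · rintro _ ⟨⟨b, a, a'⟩, rfl⟩
    have key : tripleMap Φ Ψ (b, a, a') =
        ((a : M), (a : M), 0) + (0, (a' : M), (a' : M)) + ((b : M), (b : M), (b : M)) := by
      ext <;> simp
    rw [key]
    refine add_mem (add_mem ?_ ?_) ?_ <;> apply Submodule.subset_span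
    · exact Or.inl ⟨a, a.2, rfl⟩
    · exact Or.inr (Or.inl ⟨a', a'.2, rfl⟩)
    · exact Or.inr (Or.inr ⟨b, b.2, rfl⟩)
  · rw [Submodule.span_le]
    rintro p (⟨a, ha, rfl⟩ | ⟨a, ha, rfl⟩ | ⟨b, hb, rfl⟩)
    · exact ⟨(0, ⟨a, ha⟩, 0), by simp⟩
    · exact ⟨(0, 0, ⟨a, ha⟩), by simp⟩
    · exact ⟨(⟨b, hb⟩, 0, 0), by simp⟩

end Triple

section Weight

variable {Q : Type*} [AddCommGroup Q] [Module (ZMod 2) Q] [DecidableEq Q]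
  (q : QuadraticForm (ZMod 2) Q)

def weight (u : Q) : ℚ := if u = 0 then 0 else if q u = 0 then 1 else 1 / 2

def tripleWeight (s : Q × Q × Q) : ℚ := weight q s.1 + weight q s.2.1 + weight q s.2.2

lemma weight_add_add_eq_two_iff_of_isotropic {x y : Q} (hx : q x = 0) (hy : q y = 0)
    (hxy : q (x + y) = 0) :
    weight q x + weight q (x + y) + weight q y = 2 ↔
      (x = 0 ∧ y ≠ 0) ∨ (x ≠ 0 ∧ y = 0) ∨ (x ≠ 0 ∧ y = x) := by
  have hsum : x + y = 0 ↔ y = x := by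
    rw [add_eq_zero_iff_eq_neg', ZModModule.neg_eq_self]
  simp only [weight, hx, hy, hxy, hsum, if_true]
  by_cases hx0 : x = 0 <;> by_cases hy0 : y = 0 <;> by_cases hyx : y = x <;>
    simp_all <;> norm_num

variable {Φ Ψ : Submodule (ZMod 2) Q}

lemma weight_add_add_eq_two_iff (hΦ : ∀ x ∈ Φ, q x = 0) (hΨ : ∀ x ∈ Ψ, q x = 0)
    (hdisj : Disjoint Φ Ψ) {a a' b : Q} (ha : a ∈ Φ) (ha' : a' ∈ Φ) (hb : b ∈ Ψ) (hb0 : b ≠ 0) :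
    weight q (a + b) + weight q (a + a' + b) + weight q (a' + b) = 2 ↔
      ¬(polar q a b = 0 ∧ polar q a' b = 0) := by
  have hq : ∀ x ∈ Φ, q (x + b) = polar q x b := fun x hx =>
    apply_add_eq_polar q (hΦ x hx) (hΨ b hb)
  simp only [weight, add_ne_zero_of_disjoint hdisj ha hb hb0,
    add_ne_zero_of_disjoint hdisj ha' hb hb0,
    add_ne_zero_of_disjoint hdisj (add_mem ha ha') hb hb0, if_false, hq a ha, hq a' ha',
    hq _ (add_mem ha ha'), polar_add_left]
  have h01 : ∀ z : ZMod 2, z = 0 ∨ z = 1 := by decide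
  obtain h | h := h01 (polar q a b) <;> obtain h' | h' := h01 (polar q a' b) <;>
    simp [h, h', show (1 : ZMod 2) + 1 = 0 from rfl] <;> norm_num

lemma card_tripleWeight_eq_two_zero [Fintype Φ] (hΦ : ∀ x ∈ Φ, q x = 0) :
    #{x : Φ × Φ | tripleWeight q (tripleMap Φ Ψ (0, x)) = 2} =
      3 * (2 ^ finrank (ZMod 2) Φ - 1) := by
  have hiff : ∀ x : Φ × Φ, tripleWeight q (tripleMap Φ Ψ (0, x)) = 2 ↔
      (x.1 = 0 ∧ x.2 ≠ 0) ∨ (x.1 ≠ 0 ∧ x.2 = 0) ∨ (x.1 ≠ 0 ∧ x.2 = x.1) := by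
    rintro ⟨⟨a, ha⟩, ⟨a', ha'⟩⟩
    simp only [tripleWeight, tripleMap_apply, ZeroMemClass.coe_zero, add_zero]
    rw [weight_add_add_eq_two_iff_of_isotropic q (hΦ a ha) (hΦ a' ha') (hΦ _ (add_mem ha ha'))]
    simp
  rw [filter_congr fun x _ => hiff x, card_filter_exactly_one_eq_zero,
    card_eq_pow_finrank (K := ZMod 2) (V := Φ), ZMod.card]

lemma card_tripleWeight_eq_two_of_ne_zero [Fintype Φ] (hnd : (polarBilin q).SeparatingLeft)
    (hΦ : ∀ x ∈ Φ, q x = 0) (hΨ : ∀ x ∈ Ψ, q x = 0) (hdisj : Disjoint Φ Ψ) (hsup : Φ ⊔ Ψ = ⊤)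
    {b : Ψ} (hb : b ≠ 0) :
    #{x : Φ × Φ | tripleWeight q (tripleMap Φ Ψ (b, x)) = 2} =
      (2 ^ finrank (ZMod 2) Φ) ^ 2 - (2 ^ (finrank (ZMod 2) Φ - 1)) ^ 2 := by
  set f := ((polarBilin q).compl₁₂ Φ.subtype Ψ.subtype).flip b
  have hf : f ≠ 0 := fun h => hb <| separatingRight_polarBilin_compl₁₂ q hnd hsup hΨ b
    fun x => by simpa [f] using LinearMap.congr_fun h x
  have hiff : ∀ x : Φ × Φ,
      tripleWeight q (tripleMap Φ Ψ (b, x)) = 2 ↔ ¬(f x.1 = 0 ∧ f x.2 = 0) := by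
    rintro ⟨⟨a, ha⟩, ⟨a', ha'⟩⟩
    exact weight_add_add_eq_two_iff q hΦ hΨ hdisj ha ha' b.2 (by simpa using hb)
  rw [filter_congr fun x _ => hiff x, card_filter_not_and (f · = 0),
    card_filter_apply_eq_zero hf, card_eq_pow_finrank (K := ZMod 2) (V := Φ), ZMod.card]

theorem ncard_tripleWeight_eq_two [Finite Q] (hnd : (polarBilin q).SeparatingLeft)
    (hΦ : ∀ x ∈ Φ, q x = 0) (hΨ : ∀ x ∈ Ψ, q x = 0) (hdisj : Disjoint Φ Ψ) (hsup : Φ ⊔ Ψ = ⊤) :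
    {s | s ∈ LinearMap.range (tripleMap Φ Ψ) ∧ tripleWeight q s = 2}.ncard =
      3 * (2 ^ finrank (ZMod 2) Φ - 1) + (2 ^ finrank (ZMod 2) Ψ - 1) *
        ((2 ^ finrank (ZMod 2) Φ) ^ 2 - (2 ^ (finrank (ZMod 2) Φ - 1)) ^ 2) := by
  classical
  have := Fintype.ofFinite Q
  have himage : {s | s ∈ LinearMap.range (tripleMap Φ Ψ) ∧ tripleWeight q s = 2} =
      tripleMap Φ Ψ '' {t | tripleWeight q (tripleMap Φ Ψ t) = 2} := by
    ext s
    constructor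
    · rintro ⟨⟨t, rfl⟩, hs⟩
      exact ⟨t, hs, rfl⟩
    · rintro ⟨t, ht, rfl⟩
      exact ⟨⟨t, rfl⟩, ht⟩
  rw [himage, Set.ncard_image_of_injective _ (tripleMap_injective Φ Ψ),
    Set.ncard_eq_toFinset_card', Set.toFinset_ofPred, card_filter, Fintype.sum_prod_type,
    Fintype.sum_eq_add_sum_compl 0]
  simp only [← card_filter]
  rw [card_tripleWeight_eq_two_zero q hΦ,
    sum_const_nat fun b hb => card_tripleWeight_eq_two_of_ne_zero q hnd hΦ hΨ hdisj hsup
      (by simpa using hb),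
    card_compl, card_singleton, card_eq_pow_finrank (K := ZMod 2) (V := Ψ), ZMod.card]

end Weight

/-- The number of elements of `S` of weight exactly `2` is
`3·(2⁵−1) + 3·(2⁵−1)·2⁴·2⁴ = 23901`; moreover
`156·3 + (2⁵−1)·3·8² + (2⁵−1)·2⁴·2⁴·3·8 = 196884`. -/
theorem stmt_4 (Q : Type) [AddCommGroup Q] [Module (ZMod 2) Q] [DecidableEq Q]
    (q : QuadraticForm (ZMod 2) Q)
    (hdim : Module.finrank (ZMod 2) Q = 10)
    (hnd : ∀ x : Q, (∀ y : Q, q (x + y) - q x - q y = 0) → x = 0)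
    (Φ Ψ : Submodule (ZMod 2) Q)
    (hΦsing : ∀ x ∈ Φ, q x = 0) (hΨsing : ∀ x ∈ Ψ, q x = 0)
    (hΦdim : Module.finrank (ZMod 2) Φ = 5) (hΨdim : Module.finrank (ZMod 2) Ψ = 5)
    (hint : Φ ⊓ Ψ = ⊥)
    (S : Submodule (ZMod 2) (Q × Q × Q))
    (hS : S = Submodule.span (ZMod 2)
      {p : Q × Q × Q | (∃ a ∈ Φ, p = (a, a, 0)) ∨ (∃ a ∈ Φ, p = (0, a, a)) ∨
        (∃ b ∈ Ψ, p = (b, b, b))})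
    (w : Q → ℚ)
    (hw : ∀ u : Q, w u = if u = 0 then 0 else if q u = 0 then 1 else 1 / 2) :
    {s : Q × Q × Q | s ∈ S ∧ w s.1 + w s.2.1 + w s.2.2 = 2}.ncard
        = 3 * (2 ^ 5 - 1) + 3 * (2 ^ 5 - 1) * 2 ^ 4 * 2 ^ 4 ∧
    3 * (2 ^ 5 - 1) + 3 * (2 ^ 5 - 1) * 2 ^ 4 * 2 ^ 4 = 23901 ∧
    156 * 3 + (2 ^ 5 - 1) * 3 * 8 ^ 2 + (2 ^ 5 - 1) * 2 ^ 4 * 2 ^ 4 * 3 * 8 = 196884 := by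
  refine ⟨?_, by norm_num, by norm_num⟩
  obtain rfl : w = weight q := funext hw
  have : Module.Finite (ZMod 2) Q := Module.finite_of_finrank_eq_succ hdim
  have : Finite Q := Module.finite_of_finite (ZMod 2)
  have hsup : Φ ⊔ Ψ = ⊤ := by
    refine Submodule.eq_top_of_finrank_eq ?_
    have h := Submodule.finrank_sup_add_finrank_inf_eq Φ Ψ
    rw [hint, hΦdim, hΨdim, finrank_bot] at h
    omega
  rw [hS, ← range_tripleMap]
  refine (ncard_tripleWeight_eq_two q hnd hΦsing hΨsing (disjoint_iff.mpr hint) hsup).trans ?_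
  rw [hΦdim, hΨdim]
  norm_num
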